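/- Let A, B, C be subspaces of E. If A ⊥g B, A ⊥g C, and A ∩ B ∩ C ≠ ∅, then A ⊥g (B ∩ C) or B ∩ C ⊆ A. -/

import Mathlib

/-- `Perp X Y`: every vector in the direction of `X` is orthogonal to every
vector in the direction of `Y`. -/
def Perp {E : Type*} [NormedAddCommGroup E] [InnerProductSpace ℝ E]
    (X Y : AffineSubspace ℝ E) : Prop :=
  ∀ u ∈ X.direction, ∀ v ∈ Y.direction, (inner ℝ u v : ℝ) = 0

/-- `PerpX X Y`: `X ⊥ Y` and `X ∩ Y ≠ ∅`. -/
def PerpX {E : Type*} [NormedAddCommGroup E] [InnerProductSpace ℝ E]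
    (X Y : AffineSubspace ℝ E) : Prop :=
  Perp X Y ∧ ((X : Set E) ∩ (Y : Set E)).Nonempty

/-- `PerpGo X₁ X₂`: the relation `⊥g∘`. -/
def PerpGo {E : Type*} [NormedAddCommGroup E] [InnerProductSpace ℝ E]
    (X₁ X₂ : AffineSubspace ℝ E) : Prop :=
  ∃ q : E, q ∈ X₁ ⊓ X₂ ∧ ∃ Z₁ Z₂ : AffineSubspace ℝ E,
    q ∈ Z₁ ∧ q ∈ Z₂ ∧ PerpX Z₁ (X₁ ⊓ X₂) ∧ PerpX Z₂ (X₁ ⊓ X₂) ∧ PerpX Z₁ Z₂ ∧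
    (X₁ ⊓ X₂) ⊔ Z₁ = X₁ ∧ (X₁ ⊓ X₂) ⊔ Z₂ = X₂

/-- `PerpG X₁ X₂`: the relation `⊥g`. -/
def PerpG {E : Type*} [NormedAddCommGroup E] [InnerProductSpace ℝ E]
    (X₁ X₂ : AffineSubspace ℝ E) : Prop :=
  PerpGo X₁ X₂ ∧ X₁ ⊓ X₂ ≠ X₁ ∧ X₁ ⊓ X₂ ≠ X₂

/-- Dimension of an affine subspace: the dimension of its direction. -/
noncomputable def adim {E : Type*} [NormedAddCommGroup E] [InnerProductSpace ℝ E]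
    (X : AffineSubspace ℝ E) : ℕ :=
  Module.finrank ℝ X.direction

variable {E : Type*} [NormedAddCommGroup E] [InnerProductSpace ℝ E] [FiniteDimensional ℝ E]

/-! Let `W` be the direction of `X ⊓ Y`. Then `X ⊥g∘ Y` holds as soon as the parts of the two
directions orthogonal to `W` are orthogonal to each other (take the `Zᵢ` through a common point
with those directions), and conversely `X ⊥g∘ Y` forces every vector of `Y.direction` to split
into a part in `X.direction` and a part orthogonal to it. Splitting a vector of
`B.direction ⊓ C.direction` orthogonal to the triple intersection in both ways gives the same
component in `A.direction`; that component lies in the triple intersection and is orthogonal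
to it, hence vanishes, so the vector is orthogonal to `A.direction`. -/

namespace Submodule

variable {𝕜 F : Type*} [RCLike 𝕜] [NormedAddCommGroup F] [InnerProductSpace 𝕜 F]

theorem orthogonal_inf_le_orthogonal_of_le_sup {K U V : Submodule 𝕜 F}
    (hU : U ≤ K ⊓ U ⊔ Kᗮ) (hV : V ≤ K ⊓ V ⊔ Kᗮ) :
    (K ⊓ (U ⊓ V))ᗮ ⊓ (U ⊓ V) ≤ Kᗮ := by
  rintro v ⟨hvW, hvU, hvV⟩
  obtain ⟨x, hx, z, hz, rfl⟩ := mem_sup.1 (hU hvU)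
  obtain ⟨y, hy, z', hz', hyz⟩ := mem_sup.1 (hV hvV)
  -- `x` and `y` are both the component of `v` in `K`
  have hxy : x = y := by
    have hK : x - y ∈ K := sub_mem hx.1 hy.1
    have hKperp : x - y ∈ Kᗮ := by
      rw [show x - y = z' - z by rw [sub_eq_sub_iff_add_eq_add, add_comm z', hyz]]
      exact sub_mem hz' hz
    exact sub_eq_zero.1 (disjoint_def.1 K.orthogonal_disjoint _ hK hKperp)
  subst hxy
  have hxW : x ∈ K ⊓ (U ⊓ V) := ⟨hx.1, hx.2, hy.2⟩
  have hxWperp : x ∈ (K ⊓ (U ⊓ V))ᗮ := by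
    simpa using sub_mem hvW (orthogonal_le inf_le_left hz)
  rw [disjoint_def.1 (orthogonal_disjoint _) x hxW hxWperp, zero_add]
  exact hz

end Submodule

open AffineSubspace

omit [FiniteDimensional ℝ E] in
theorem perp_iff_isOrtho {X Y : AffineSubspace ℝ E} :
    Perp X Y ↔ X.direction ⟂ Y.direction :=
  Submodule.isOrtho_iff_inner_eq.symm

omit [FiniteDimensional ℝ E] in
theorem PerpGo.direction_le {X Y : AffineSubspace ℝ E} (h : PerpGo X Y) :
    Y.direction ≤ X.direction ⊓ Y.direction ⊔ X.directionᗮ := by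
  obtain ⟨q, hq, Z₁, Z₂, hqZ₁, hqZ₂, ⟨hZ₁, -⟩, ⟨hZ₂, -⟩, ⟨hZ₁₂, -⟩, hX, hY⟩ := h
  rw [perp_iff_isOrtho] at hZ₁ hZ₂ hZ₁₂
  have hdX : X.direction = (X ⊓ Y).direction ⊔ Z₁.direction := by
    rw [← direction_sup_eq_sup_direction hq hqZ₁, hX]
  have hdY : Y.direction = (X ⊓ Y).direction ⊔ Z₂.direction := by
    rw [← direction_sup_eq_sup_direction hq hqZ₂, hY]
  have hZ₂X : Z₂.direction ≤ X.directionᗮ := by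
    rw [← Submodule.isOrtho_iff_le, hdX]
    exact Submodule.isOrtho_sup_right.2 ⟨hZ₂, hZ₁₂.symm⟩
  calc Y.direction = (X ⊓ Y).direction ⊔ Z₂.direction := hdY
    _ ≤ X.direction ⊓ Y.direction ⊔ X.directionᗮ :=
      sup_le_sup (direction_inf_of_mem hq.1 hq.2).le hZ₂X

omit [FiniteDimensional ℝ E] in
theorem perpX_mk'_orthogonal_inf {S : AffineSubspace ℝ E} {p : E} (hp : p ∈ S)
    (U : Submodule ℝ E) : PerpX (mk' p (S.directionᗮ ⊓ U)) S := by
  refine ⟨perp_iff_isOrtho.2 ?_, p, self_mem_mk' _ _, hp⟩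
  rw [direction_mk']
  exact (Submodule.isOrtho_orthogonal_right _).symm.mono_left inf_le_left

omit [FiniteDimensional ℝ E] in
theorem sup_mk'_orthogonal_inf {S X : AffineSubspace ℝ E} {p : E} (hp : p ∈ S) (hSX : S ≤ X)
    [S.direction.HasOrthogonalProjection] :
    S ⊔ mk' p (S.directionᗮ ⊓ X.direction) = X := by
  refine ext_of_direction_eq ?_ ⟨p, le_sup_left (a := S) hp, hSX hp⟩
  rw [direction_sup_eq_sup_direction hp (self_mem_mk' _ _), direction_mk']
  exact Submodule.sup_orthogonal_inf_of_hasOrthogonalProjection (direction_le hSX)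

theorem perpGo_of_isOrtho {X Y : AffineSubspace ℝ E} {p : E} (hp : p ∈ X ⊓ Y)
    (h : (X ⊓ Y).directionᗮ ⊓ X.direction ⟂ (X ⊓ Y).directionᗮ ⊓ Y.direction) :
    PerpGo X Y := by
  refine ⟨p, hp, _, _, self_mem_mk' _ _, self_mem_mk' _ _, perpX_mk'_orthogonal_inf hp _,
    perpX_mk'_orthogonal_inf hp _, ⟨?_, p, self_mem_mk' _ _, self_mem_mk' _ _⟩,
    sup_mk'_orthogonal_inf hp inf_le_left, sup_mk'_orthogonal_inf hp inf_le_right⟩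
  rwa [perp_iff_isOrtho, direction_mk', direction_mk']

theorem PerpGo.inf {A B C : AffineSubspace ℝ E} (hB : PerpGo A B) (hC : PerpGo A C) {p : E}
    (hp : p ∈ A ⊓ (B ⊓ C)) : PerpGo A (B ⊓ C) := by
  refine perpGo_of_isOrtho hp ?_
  rw [direction_inf_of_mem hp.1 hp.2, direction_inf_of_mem hp.2.1 hp.2.2]
  have h := Submodule.orthogonal_inf_le_orthogonal_of_le_sup hB.direction_le hC.direction_le
  exact (Submodule.isOrtho_iff_le.2 h).symm.mono_left inf_le_right

theorem stmt12_general (A B C : AffineSubspace ℝ E)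
    (h₁ : PerpG A B) (h₂ : PerpG A C)
    (h₃ : ((A : Set E) ∩ (B : Set E) ∩ (C : Set E)).Nonempty) :
    PerpG A (B ⊓ C) ∨ B ⊓ C ≤ A := by
  obtain ⟨p, ⟨hpA, hpB⟩, hpC⟩ := h₃
  by_cases hle : B ⊓ C ≤ A
  · exact Or.inr hle
  refine Or.inl ⟨h₁.1.inf h₂.1 ⟨hpA, hpB, hpC⟩, fun h => h₁.2.1 ?_,
    fun h => hle (inf_eq_right.1 h)⟩
  exact inf_eq_left.2 ((inf_eq_left.1 h).trans inf_le_left)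

theorem stmt12 (A B C : AffineSubspace ℝ E)
    (hA : (A : Set E).Nonempty) (hB : (B : Set E).Nonempty) (hC : (C : Set E).Nonempty)
    (h₁ : PerpG A B) (h₂ : PerpG A C)
    (h₃ : ((A : Set E) ∩ (B : Set E) ∩ (C : Set E)).Nonempty) :
    PerpG A (B ⊓ C) ∨ B ⊓ C ≤ A :=
  stmt12_general A B C h₁ h₂ h₃
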